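/- Let S be a unitary numerical semigroup generated by {a1,a2,a3,a4}, n = a2−a1, and I = (0+S) ∪ (n+S). Then I + (S−I) = S \ {0}, where S−I is the dual of I. -/
import Mathlib


open Pointwise

def SG (a1 a2 a3 a4 : ℕ) : Set ℤ :=
  {s | ∃ t1 t2 t3 t4 : ℕ, s = t1 * a1 + t2 * a2 + t3 * a3 + t4 * a4}

def dual (S I : Set ℤ) : Set ℤ := {z | ∀ i ∈ I, z + i ∈ S}

lemma SG_add {a1 a2 a3 a4 : ℕ} {x y : ℤ} (hx : x ∈ SG a1 a2 a3 a4)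
    (hy : y ∈ SG a1 a2 a3 a4) : x + y ∈ SG a1 a2 a3 a4 := by
  obtain ⟨s1, s2, s3, s4, rfl⟩ := hx
  obtain ⟨u1, u2, u3, u4, rfl⟩ := hy
  exact ⟨s1+u1, s2+u2, s3+u3, s4+u4, by push_cast; ring⟩

lemma SG_nonneg {a1 a2 a3 a4 : ℕ} {x : ℤ} (hx : x ∈ SG a1 a2 a3 a4) : 0 ≤ x := by
  obtain ⟨s1, s2, s3, s4, rfl⟩ := hx
  positivity

theorem stmt_14 (a1 a2 a3 a4 : ℕ)
(h1 : 0 < a1) (h12 : a1 < a2) (h23 : a2 < a3) (h34 : a3 < a4)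
    (hgcd : Nat.gcd (Nat.gcd a1 a2) (Nat.gcd a3 a4) = 1)
    (hd12 : ¬ a1 ∣ a2) (hd13 : ¬ a1 ∣ a3) (hd14 : ¬ a1 ∣ a4)
    (hd23 : ¬ a2 ∣ a3) (hd24 : ¬ a2 ∣ a4) (hd34 : ¬ a3 ∣ a4)
    (hsum : a1 + a4 = a2 + a3)
    (hu : a1 + a4 = Nat.gcd a1 a4 * Nat.gcd a2 a3)
    (n : ℕ) (hn : n = a2 - a1)
    (I : Set ℤ) (hI : I = {z | z ∈ SG a1 a2 a3 a4 ∨ z - n ∈ SG a1 a2 a3 a4}) :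
    I + dual (SG a1 a2 a3 a4) I = SG a1 a2 a3 a4 \ {0} := by
  set S := SG a1 a2 a3 a4 with hS
  have hnpos : 0 < n := by omega
  have hcast : (n : ℤ) + a1 = a2 := by omega
  have h34cast : (n : ℤ) + a3 = a4 := by omega
  have ha1mem : (a1 : ℤ) ∈ S := ⟨1, 0, 0, 0, by push_cast; ring⟩
  have ha2mem : (a2 : ℤ) ∈ S := ⟨0, 1, 0, 0, by push_cast; ring⟩
  have ha3mem : (a3 : ℤ) ∈ S := ⟨0, 0, 1, 0, by push_cast; ring⟩
  have ha4mem : (a4 : ℤ) ∈ S := ⟨0, 0, 0, 1, by push_cast; ring⟩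
  have h0mem : (0 : ℤ) ∈ S := ⟨0, 0, 0, 0, by push_cast; ring⟩
  -- n is not in S
  have hnS : (n : ℤ) ∉ S := by
    rintro ⟨t1, t2, t3, t4, ht⟩
    have htn : n = t1 * a1 + t2 * a2 + t3 * a3 + t4 * a4 := by exact_mod_cast ht
    have h2 : t2 = 0 := by
      by_contra h
      have : a2 ≤ t2 * a2 := Nat.le_mul_of_pos_left a2 (Nat.pos_of_ne_zero h)
      have hlt : n < a2 := by omega
      linarith [Nat.zero_le (t1*a1), Nat.zero_le (t3*a3), Nat.zero_le (t4*a4)]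
    have h3 : t3 = 0 := by
      by_contra h
      have : a3 ≤ t3 * a3 := Nat.le_mul_of_pos_left a3 (Nat.pos_of_ne_zero h)
      have hlt : n < a3 := by omega
      linarith [Nat.zero_le (t1*a1), Nat.zero_le (t2*a2), Nat.zero_le (t4*a4)]
    have h4 : t4 = 0 := by
      by_contra h
      have : a4 ≤ t4 * a4 := Nat.le_mul_of_pos_left a4 (Nat.pos_of_ne_zero h)
      have hlt : n < a4 := by omega
      linarith [Nat.zero_le (t1*a1), Nat.zero_le (t2*a2), Nat.zero_le (t3*a3)]
    subst h2 h3 h4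
    have hn' : n = t1 * a1 := by omega
    have ha2 : a1 + n = a2 := by omega
    exact hd12 ⟨t1 + 1, by rw [Nat.mul_add, Nat.mul_one]; linarith [Nat.mul_comm a1 t1]⟩
  have h0I : (0 : ℤ) ∈ I := by rw [hI]; left; exact h0mem
  have hnI : (n : ℤ) ∈ I := by
    rw [hI]; right; simpa using h0mem
  have hdual1 : ∀ s ∈ S, (a1 : ℤ) + s ∈ dual S I := by
    intro s hs i hi
    rw [hI] at hi
    rcases hi with hiS | hiN
    · exact SG_add (SG_add ha1mem hs) hiS
    · have heq : (a1 : ℤ) + s + i = a2 + (s + (i - n)) := by linarith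
      rw [heq]
      exact SG_add ha2mem (SG_add hs hiN)
  have hdual3 : ∀ s ∈ S, (a3 : ℤ) + s ∈ dual S I := by
    intro s hs i hi
    rw [hI] at hi
    rcases hi with hiS | hiN
    · exact SG_add (SG_add ha3mem hs) hiS
    · have heq : (a3 : ℤ) + s + i = a4 + (s + (i - n)) := by linarith
      rw [heq]
      exact SG_add ha4mem (SG_add hs hiN)
  ext x
  rw [Set.mem_add]
  constructor
  · rintro ⟨i, hi, d, hd, rfl⟩
    refine ⟨by simpa [add_comm] using hd i hi, ?_⟩
    simp only [Set.mem_singleton_iff]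
    intro h0
    rw [hI] at hi
    rcases hi with hiS | hiN
    · have hin : i + (n : ℤ) ∈ I := by
        rw [hI]; right; simpa using hiS
      have hmem := hd (i + n) hin
      have heq : d + (i + (n : ℤ)) = n := by linarith
      rw [heq] at hmem
      exact hnS hmem
    · have hmem := hd (i - n) (by rw [hI]; left; exact hiN)
      have hge := SG_nonneg hmem
      have hpos : (0 : ℤ) < n := by exact_mod_cast hnpos
      linarith
  · rintro ⟨hxS, hx0⟩
    simp only [Set.mem_singleton_iff] at hx0
    obtain ⟨t1, t2, t3, t4, rfl⟩ := hxS
    have hne : t1 ≠ 0 ∨ t2 ≠ 0 ∨ t3 ≠ 0 ∨ t4 ≠ 0 := by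
      by_contra h
      push_neg at h
      obtain ⟨e1, e2, e3, e4⟩ := h
      subst e1 e2 e3 e4
      simp at hx0
    rcases hne with h | h | h | h
    · obtain ⟨k, rfl⟩ := Nat.exists_eq_succ_of_ne_zero h
      refine ⟨0, h0I, (a1 : ℤ) + ((k : ℤ) * a1 + t2 * a2 + t3 * a3 + t4 * a4),
        hdual1 _ ⟨k, t2, t3, t4, by push_cast; ring⟩, by push_cast; ring⟩
    · obtain ⟨k, rfl⟩ := Nat.exists_eq_succ_of_ne_zero h
      refine ⟨(n : ℤ), hnI, (a1 : ℤ) + ((t1 : ℤ) * a1 + k * a2 + t3 * a3 + t4 * a4),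
        hdual1 _ ⟨t1, k, t3, t4, by push_cast; ring⟩, by push_cast; linear_combination hcast⟩
    · obtain ⟨k, rfl⟩ := Nat.exists_eq_succ_of_ne_zero h
      refine ⟨0, h0I, (a3 : ℤ) + ((t1 : ℤ) * a1 + t2 * a2 + k * a3 + t4 * a4),
        hdual3 _ ⟨t1, t2, k, t4, by push_cast; ring⟩, by push_cast; ring⟩
    · obtain ⟨k, rfl⟩ := Nat.exists_eq_succ_of_ne_zero h
      refine ⟨(n : ℤ), hnI, (a3 : ℤ) + ((t1 : ℤ) * a1 + t2 * a2 + t3 * a3 + k * a4),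
        hdual3 _ ⟨t1, t2, t3, k, by push_cast; ring⟩, by push_cast; linear_combination h34cast⟩
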